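/- arXiv:2509.23306 — 3 statements merged into one kernel-verified Lean document; each statement's English description precedes it below -/
import Mathlib

section
/- Let λ > 0 and U > 0, and let φ̂ : ℝ × (0,∞) → ℝ be continuous and square-integrable on the open half-plane ℝ²₊ = ℝ × (0,∞), such that for every z > 0 the horizontal slice φ̂(·,z) is square-integrable on ℝ. Define φ(x,z) = (1/U) ∫_{-∞}^{x} e^{-(λ/U)(x-ξ)} φ̂(ξ,z) dξ. Then: (i) for every (x,z) ∈ ℝ × (0,∞), φ is partially differentiable in x and satisfies λ·φ(x,z) + U·∂ₓφ(x,z) = φ̂(x,z); (ii) φ is square-integrable on ℝ²₊ with ‖φ‖_{L²(ℝ²₊)} ≤ (1/λ)‖φ̂‖_{L²(ℝ²₊)}; and (iii) ∂ₓφ is square-integrable on ℝ²₊ with ‖∂ₓφ‖_{L²(ℝ²₊)} ≤ (2/U)‖φ̂‖_{L²(ℝ²₊)}. -/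
open MeasureTheory Real Set

/-- The open upper half-plane `ℝ²₊ = ℝ × (0,∞)`, as a subset of `ℝ × ℝ`. -/
def upperHalfPlane2 : Set (ℝ × ℝ) := {p : ℝ × ℝ | 0 < p.2}

/-!
With `c = λ/U` and the kernel `K(t) = e^{-ct}` on `t ≥ 0`, `φ(·,z) = U⁻¹ (K ∗ φ̂(·,z))`.
Writing `(K ∗ f)(x) = e^{-cx} ∫_{-∞}^x e^{cξ} f(ξ) dξ` and differentiating gives
`(K ∗ f)' = f - c (K ∗ f)`, which is (i). Cauchy–Schwarz with weight `K` gives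
`|K ∗ f|² ≤ ‖K‖₁ (K ∗ |f|²)`, and integrating in `x` (Tonelli) gives Young's bound
`‖K ∗ f‖₂ ≤ ‖K‖₁ ‖f‖₂ = ‖f‖₂ / c`; integrating over `z` yields (ii). Finally
`∂ₓφ = (φ̂ - λφ)/U`, so (iii) follows from (ii) and the triangle inequality.
-/

open scoped ENNReal

theorem ENNReal.lintegral_mul_sq_le {α : Type*} [MeasurableSpace α] {μ : Measure α}
    {w g : α → ℝ≥0∞} (hw : AEMeasurable w μ) (hg : AEMeasurable g μ) :
    (∫⁻ a, w a * g a ∂μ) ^ 2 ≤ (∫⁻ a, w a ∂μ) * ∫⁻ a, w a * g a ^ 2 ∂μ := by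
  have hsq_sqrt : ∀ x : ℝ≥0∞, (x ^ 2) ^ (2⁻¹ : ℝ) = x := fun x ↦ by
    simpa using ENNReal.pow_rpow_inv_natCast two_ne_zero x
  have hsqrt_sq : ∀ x : ℝ≥0∞, (x ^ (2⁻¹ : ℝ)) ^ 2 = x := fun x ↦ by
    simpa using ENNReal.rpow_inv_natCast_pow two_ne_zero x
  have hsplit : ∀ a, w a * g a = w a ^ (2⁻¹ : ℝ) * (w a * g a ^ 2) ^ (2⁻¹ : ℝ) := fun a ↦ by
    rw [ENNReal.mul_rpow_of_nonneg _ _ (by norm_num), ← mul_assoc,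
      ← ENNReal.rpow_add_of_nonneg _ _ (by norm_num) (by norm_num), hsq_sqrt]
    norm_num
  calc (∫⁻ a, w a * g a ∂μ) ^ 2
      = (∫⁻ a, w a ^ (2⁻¹ : ℝ) * (w a * g a ^ 2) ^ (2⁻¹ : ℝ) ∂μ) ^ 2 := by
        simp_rw [← hsplit]
    _ ≤ ((∫⁻ a, w a ∂μ) ^ (2⁻¹ : ℝ) * (∫⁻ a, w a * g a ^ 2 ∂μ) ^ (2⁻¹ : ℝ)) ^ 2 :=
        ENNReal.pow_le_pow_left <| ENNReal.lintegral_mul_norm_pow_le hw (hw.mul (hg.pow_const 2))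
          (by norm_num) (by norm_num) (by norm_num)
    _ = (∫⁻ a, w a ∂μ) * ∫⁻ a, w a * g a ^ 2 ∂μ := by
        rw [mul_pow, hsqrt_sq, hsqrt_sq]

section LpBounds

variable {α : Type*} [MeasurableSpace α] {μ : Measure α}

lemma eLpNorm_two_pow_two {E : Type*} [NormedAddCommGroup E] (f : α → E) :
    eLpNorm f 2 μ ^ 2 = ∫⁻ a, ‖f a‖ₑ ^ 2 ∂μ := by
  simpa [ENNReal.rpow_two] using eLpNorm_nnreal_pow_eq_lintegral (f := f) (μ := μ) two_ne_zero

lemma eLpNorm_two_le_mul_of_lintegral_le {E F : Type*} [NormedAddCommGroup E]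
    [NormedAddCommGroup F] {f : α → E} {g : α → F} {C : ℝ≥0∞}
    (h : ∫⁻ a, ‖f a‖ₑ ^ 2 ∂μ ≤ C ^ 2 * ∫⁻ a, ‖g a‖ₑ ^ 2 ∂μ) :
    eLpNorm f 2 μ ≤ C * eLpNorm g 2 μ := by
  rwa [← ENNReal.pow_le_pow_left_iff two_ne_zero, mul_pow, eLpNorm_two_pow_two,
    eLpNorm_two_pow_two]

lemma eLpNorm_sub_const_mul_le_two_mul {p : ℝ≥0∞} (hp : 1 ≤ p) {f v : α → ℝ}
    (hf : AEStronglyMeasurable f μ) (hv : AEStronglyMeasurable v μ) {l : ℝ} (hl : 0 < l)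
    (h : eLpNorm v p μ ≤ ENNReal.ofReal (1 / l) * eLpNorm f p μ) :
    eLpNorm (fun a ↦ f a - l * v a) p μ ≤ 2 * eLpNorm f p μ := by
  have hlv : eLpNorm (l • v) p μ ≤ eLpNorm f p μ :=
    calc eLpNorm (l • v) p μ = ENNReal.ofReal l * eLpNorm v p μ := by
          rw [eLpNorm_const_smul, Real.enorm_eq_ofReal hl.le]
      _ ≤ ENNReal.ofReal l * (ENNReal.ofReal (1 / l) * eLpNorm f p μ) := by gcongr
      _ = eLpNorm f p μ := by
          rw [← mul_assoc, ← ENNReal.ofReal_mul hl.le, mul_one_div_cancel hl.ne',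
            ENNReal.ofReal_one, one_mul]
  calc eLpNorm (fun a ↦ f a - l * v a) p μ ≤ eLpNorm f p μ + eLpNorm (l • v) p μ :=
        eLpNorm_sub_le hf (hv.const_smul l) hp
    _ ≤ 2 * eLpNorm f p μ := by rw [two_mul]; gcongr

end LpBounds

section ExpKernel

variable {c : ℝ}

lemma exp_neg_mul_sub (c x ξ : ℝ) : exp (-c * (x - ξ)) = exp (-c * x) * exp (c * ξ) := by
  rw [← exp_add]; ring_nf

lemma integrableOn_exp_neg_mul_sub_Iic (hc : 0 < c) (x : ℝ) :
    IntegrableOn (fun ξ ↦ exp (-c * (x - ξ))) (Iic x) := by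
  simp_rw [exp_neg_mul_sub]
  exact (integrableOn_exp_mul_Iic hc x).const_mul _

lemma lintegral_exp_neg_mul_sub_Iic (hc : 0 < c) (x : ℝ) :
    ∫⁻ ξ in Iic x, ENNReal.ofReal (exp (-c * (x - ξ))) = ENNReal.ofReal (1 / c) := by
  rw [← ofReal_integral_eq_lintegral_ofReal (integrableOn_exp_neg_mul_sub_Iic hc x)
    (ae_of_all _ fun _ ↦ (exp_pos _).le)]
  simp_rw [exp_neg_mul_sub]
  rw [integral_const_mul, integral_exp_mul_Iic hc, mul_div_assoc', ← exp_add]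
  simp

lemma lintegral_exp_neg_mul_sub_Ici (hc : 0 < c) (ξ : ℝ) :
    ∫⁻ x in Ici ξ, ENNReal.ofReal (exp (-c * (x - ξ))) = ENNReal.ofReal (1 / c) := by
  have hint : IntegrableOn (fun x ↦ exp (-c * (x - ξ))) (Ioi ξ) := by
    simp_rw [exp_neg_mul_sub]
    exact (integrableOn_exp_mul_Ioi (neg_neg_iff_pos.2 hc) ξ).mul_const _
  rw [← restrict_Ioi_eq_restrict_Ici, ← ofReal_integral_eq_lintegral_ofReal hint
    (ae_of_all _ fun _ ↦ (exp_pos _).le)]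
  simp_rw [exp_neg_mul_sub]
  rw [integral_mul_const, integral_exp_mul_Ioi (neg_neg_iff_pos.2 hc), neg_div_neg_eq,
    div_mul_eq_mul_div, ← exp_add]
  simp

lemma lintegral_lintegral_Iic_exp_neg_mul_sub (hc : 0 < c) {G : ℝ → ℝ≥0∞} (hG : Measurable G) :
    ∫⁻ x, ∫⁻ ξ in Iic x, ENNReal.ofReal (exp (-c * (x - ξ))) * G ξ =
      ENNReal.ofReal (1 / c) * ∫⁻ ξ, G ξ := by
  set K : ℝ → ℝ → ℝ≥0∞ := fun x ξ ↦ {p : ℝ × ℝ | p.2 ≤ p.1}.indicator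
    (fun p ↦ ENNReal.ofReal (exp (-c * (p.1 - p.2))) * G p.2) (x, ξ)
  have hK : Measurable (Function.uncurry K) :=
    Measurable.indicator (by fun_prop) (measurableSet_le measurable_snd measurable_fst)
  calc ∫⁻ x, ∫⁻ ξ in Iic x, ENNReal.ofReal (exp (-c * (x - ξ))) * G ξ
      = ∫⁻ x, ∫⁻ ξ, K x ξ := by
        congr with x
        rw [← lintegral_indicator measurableSet_Iic]
        simp [K, indicator_apply]
    _ = ∫⁻ ξ, ∫⁻ x, K x ξ := lintegral_lintegral_swap hK.aemeasurable
    _ = ∫⁻ ξ, ENNReal.ofReal (1 / c) * G ξ := by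
        congr with ξ
        rw [← lintegral_exp_neg_mul_sub_Ici hc ξ, ← lintegral_mul_const _ (by fun_prop),
          ← lintegral_indicator measurableSet_Ici]
        simp [K, indicator_apply]
    _ = ENNReal.ofReal (1 / c) * ∫⁻ ξ, G ξ := lintegral_const_mul _ hG

end ExpKernel

/-- `(K ∗ f)(x)` for the one-sided kernel `K(t) = e^{-ct} 1_{t ≥ 0}`. -/
noncomputable def causalExpConv (c : ℝ) (f : ℝ → ℝ) (x : ℝ) : ℝ :=
  ∫ ξ in Iic x, exp (-c * (x - ξ)) * f ξ

noncomputable def causalExpConvFst (c : ℝ) (g : ℝ × ℝ → ℝ) (p : ℝ × ℝ) : ℝ :=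
  causalExpConv c (fun ξ ↦ g (ξ, p.2)) p.1

section CausalExpConv

variable {c : ℝ}

lemma integrableOn_exp_mul_mul_Iic (hc : 0 < c) {f : ℝ → ℝ} (hf : MemLp f 2) (x : ℝ) :
    IntegrableOn (fun ξ ↦ exp (c * ξ) * f ξ) (Iic x) := by
  have hexp : MemLp (fun ξ ↦ exp (c * ξ)) 2 (volume.restrict (Iic x)) := by
    have hcont : Continuous fun ξ ↦ exp (c * ξ) := by fun_prop
    refine (memLp_two_iff_integrable_sq hcont.aestronglyMeasurable).2 ?_
    have hsq : (fun ξ ↦ exp (c * ξ) ^ 2) = fun ξ ↦ exp (2 * c * ξ) := by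
      ext ξ; rw [sq, ← exp_add]; ring_nf
    rw [hsq]
    exact integrableOn_exp_mul_Iic (by positivity) x
  exact hexp.integrable_mul (hf.restrict _)

lemma hasDerivAt_integral_Iic {h : ℝ → ℝ} (hint : ∀ y, IntegrableOn h (Iic y)) {x : ℝ}
    (hx : ContinuousAt h x) : HasDerivAt (fun y ↦ ∫ ξ in Iic y, h ξ) (h x) x := by
  have hsplit : (fun y ↦ ∫ ξ in Iic y, h ξ) = fun y ↦ (∫ ξ in Iic x, h ξ) + ∫ ξ in x..y, h ξ := by
    ext y
    rw [← intervalIntegral.integral_Iic_sub_Iic (hint x) (hint y)]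
    ring
  rw [hsplit]
  refine (intervalIntegral.integral_hasDerivAt_right IntervalIntegrable.refl ?_ hx).const_add _
  exact AEStronglyMeasurable.stronglyMeasurableAtFilter_of_mem (hint (x + 1)).aestronglyMeasurable
    (Iic_mem_nhds (lt_add_one x))

lemma causalExpConv_eq_exp_mul_integral (c : ℝ) (f : ℝ → ℝ) (x : ℝ) :
    causalExpConv c f x = exp (-c * x) * ∫ ξ in Iic x, exp (c * ξ) * f ξ := by
  simp_rw [causalExpConv, ← integral_const_mul, exp_neg_mul_sub, mul_assoc]

lemma hasDerivAt_causalExpConv {f : ℝ → ℝ}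
    (hint : ∀ y, IntegrableOn (fun ξ ↦ exp (c * ξ) * f ξ) (Iic y)) {x : ℝ}
    (hx : ContinuousAt f x) :
    HasDerivAt (causalExpConv c f) (f x - c * causalExpConv c f x) x := by
  have hexp : HasDerivAt (fun y ↦ exp (-c * y)) (exp (-c * x) * -c) x := by
    simpa using ((hasDerivAt_id x).const_mul (-c)).exp
  have hint' := hasDerivAt_integral_Iic hint
    ((by fun_prop : Continuous fun ξ ↦ exp (c * ξ)).continuousAt.mul hx)
  rw [funext (causalExpConv_eq_exp_mul_integral c f)]
  refine (hexp.mul hint').congr_deriv ?_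
  rw [← mul_assoc, ← exp_add]
  simp only [neg_mul, neg_add_cancel, exp_zero]
  ring

lemma enorm_causalExpConv_sq_le (hc : 0 < c) {f : ℝ → ℝ} (hf : Measurable f) (x : ℝ) :
    ‖causalExpConv c f x‖ₑ ^ 2 ≤
      ENNReal.ofReal (1 / c) * ∫⁻ ξ in Iic x, ENNReal.ofReal (exp (-c * (x - ξ))) * ‖f ξ‖ₑ ^ 2 :=
  calc ‖causalExpConv c f x‖ₑ ^ 2
      ≤ (∫⁻ ξ in Iic x, ENNReal.ofReal (exp (-c * (x - ξ))) * ‖f ξ‖ₑ) ^ 2 := by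
        refine ENNReal.pow_le_pow_left ((enorm_integral_le_lintegral_enorm _).trans_eq ?_)
        simp_rw [enorm_mul, Real.enorm_eq_ofReal (exp_pos _).le]
    _ ≤ _ := ENNReal.lintegral_mul_sq_le (by fun_prop) hf.enorm.aemeasurable
    _ = _ := by rw [lintegral_exp_neg_mul_sub_Iic hc]

theorem lintegral_enorm_causalExpConv_sq_le (hc : 0 < c) {f : ℝ → ℝ} (hf : Measurable f) :
    ∫⁻ x, ‖causalExpConv c f x‖ₑ ^ 2 ≤ ENNReal.ofReal (1 / c) ^ 2 * ∫⁻ x, ‖f x‖ₑ ^ 2 :=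
  calc ∫⁻ x, ‖causalExpConv c f x‖ₑ ^ 2
      ≤ ∫⁻ x, ENNReal.ofReal (1 / c) *
          ∫⁻ ξ in Iic x, ENNReal.ofReal (exp (-c * (x - ξ))) * ‖f ξ‖ₑ ^ 2 :=
        lintegral_mono (enorm_causalExpConv_sq_le hc hf)
    _ = ENNReal.ofReal (1 / c) ^ 2 * ∫⁻ x, ‖f x‖ₑ ^ 2 := by
        rw [lintegral_const_mul' _ _ ENNReal.ofReal_ne_top,
          lintegral_lintegral_Iic_exp_neg_mul_sub hc (hf.enorm.pow_const 2), ← mul_assoc, sq]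

lemma stronglyMeasurable_causalExpConvFst (c : ℝ) {g : ℝ × ℝ → ℝ} (hg : Measurable g) :
    StronglyMeasurable (causalExpConvFst c g) := by
  have hk : StronglyMeasurable fun q : (ℝ × ℝ) × ℝ ↦ {q : (ℝ × ℝ) × ℝ | q.2 ≤ q.1.1}.indicator
      (fun q ↦ exp (-c * (q.1.1 - q.2)) * g (q.2, q.1.2)) q :=
    (Measurable.indicator (by fun_prop)
      (measurableSet_le (by fun_prop) (by fun_prop))).stronglyMeasurable
  convert hk.integral_prod_right' (ν := volume) using 2 with p
  rw [causalExpConvFst, causalExpConv, ← integral_indicator measurableSet_Iic]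
  simp [indicator_apply]

theorem eLpNorm_causalExpConvFst_le (hc : 0 < c) {ν : Measure ℝ} [SFinite ν]
    {g : ℝ × ℝ → ℝ} (hg : Measurable g) :
    eLpNorm (causalExpConvFst c g) 2 (volume.prod ν) ≤
      ENNReal.ofReal (1 / c) * eLpNorm g 2 (volume.prod ν) := by
  refine eLpNorm_two_le_mul_of_lintegral_le ?_
  rw [lintegral_prod_symm _
      ((stronglyMeasurable_causalExpConvFst c hg).measurable.enorm.pow_const 2).aemeasurable,
    lintegral_prod_symm _ (hg.enorm.pow_const 2).aemeasurable,
    ← lintegral_const_mul' _ _ (by finiteness)]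
  exact lintegral_mono fun z ↦ lintegral_enorm_causalExpConv_sq_le hc (hg.comp (by fun_prop))

end CausalExpConv

section UpperHalfPlane

lemma isOpen_upperHalfPlane2 : IsOpen upperHalfPlane2 :=
  isOpen_lt continuous_const continuous_snd

lemma volume_restrict_upperHalfPlane2 :
    volume.restrict upperHalfPlane2 = (volume : Measure ℝ).prod (volume.restrict (Ioi 0)) := by
  have : upperHalfPlane2 = univ ×ˢ Ioi (0 : ℝ) := by ext p; simp [upperHalfPlane2]
  rw [this, Measure.volume_eq_prod, ← Measure.prod_restrict, Measure.restrict_univ]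

lemma ContinuousOn.continuous_slice_upperHalfPlane2 {F : ℝ × ℝ → ℝ}
    (hF : ContinuousOn F upperHalfPlane2) {z : ℝ} (hz : 0 < z) : Continuous fun x ↦ F (x, z) :=
  hF.comp_continuous (by fun_prop) fun _ ↦ hz

theorem memLp_causalExpConvFst_upperHalfPlane2 {c : ℝ} (hc : 0 < c) {F : ℝ × ℝ → ℝ}
    (hF : ContinuousOn F upperHalfPlane2) (hF2 : MemLp F 2 (volume.restrict upperHalfPlane2)) :
    MemLp (causalExpConvFst c F) 2 (volume.restrict upperHalfPlane2) ∧
      eLpNorm (causalExpConvFst c F) 2 (volume.restrict upperHalfPlane2) ≤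
        ENNReal.ofReal (1 / c) * eLpNorm F 2 (volume.restrict upperHalfPlane2) := by
  classical
  have hH : MeasurableSet upperHalfPlane2 := isOpen_upperHalfPlane2.measurableSet
  -- `F` need not be measurable off the half-plane, so Fubini is applied to an extension by `0`,
  -- which has the same slices `F(·, z)` for `z > 0`.
  set g := upperHalfPlane2.piecewise F 0
  have hg : Measurable g := hF.measurable_piecewise continuousOn_const hH
  have hgF : g =ᵐ[volume.restrict upperHalfPlane2] F := by
    filter_upwards [ae_restrict_mem hH] with p hp using piecewise_eq_of_mem _ _ _ hp
  have hconv : causalExpConvFst c F =ᵐ[volume.restrict upperHalfPlane2] causalExpConvFst c g := by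
    filter_upwards [ae_restrict_mem hH] with p hp
    have hslice : (fun ξ ↦ g (ξ, p.2)) = fun ξ ↦ F (ξ, p.2) :=
      funext fun ξ ↦ piecewise_eq_of_mem _ _ _ hp
    rw [causalExpConvFst, causalExpConvFst, hslice]
  have hbound : eLpNorm (causalExpConvFst c F) 2 (volume.restrict upperHalfPlane2) ≤
      ENNReal.ofReal (1 / c) * eLpNorm F 2 (volume.restrict upperHalfPlane2) := by
    rw [eLpNorm_congr_ae hconv, ← eLpNorm_congr_ae hgF, volume_restrict_upperHalfPlane2]
    exact eLpNorm_causalExpConvFst_le hc hg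
  exact ⟨⟨(stronglyMeasurable_causalExpConvFst c hg).aestronglyMeasurable.congr hconv.symm,
    hbound.trans_lt (ENNReal.mul_lt_top ENNReal.ofReal_lt_top hF2.2)⟩, hbound⟩

end UpperHalfPlane

/-- Let `λ > 0` and `U > 0`, and let `φ̂ : ℝ × (0,∞) → ℝ` be continuous
and square-integrable on the half-plane `ℝ²₊ = ℝ × (0,∞)`, with all horizontal slices
`φ̂(·,z)`, `z > 0`, square-integrable on `ℝ`.  Define
`φ(x,z) = (1/U) ∫_{-∞}^{x} e^{-(λ/U)(x-ξ)} φ̂(ξ,z) dξ`.  Then: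
(i) `φ` is partially differentiable in `x` and `λ·φ + U·∂ₓφ = φ̂` on `ℝ × (0,∞)`;
(ii) `φ` is square-integrable on `ℝ²₊` with `‖φ‖ ≤ (1/λ)‖φ̂‖`;
(iii) `∂ₓφ` is square-integrable on `ℝ²₊` with `‖∂ₓφ‖ ≤ (2/U)‖φ̂‖`. -/
theorem statement4
    (l U : ℝ) (hl : 0 < l) (hU : 0 < U)
    (φhat : ℝ → ℝ → ℝ)
    (hcont : ContinuousOn (fun p : ℝ × ℝ => φhat p.1 p.2) upperHalfPlane2)
    (hsq : MemLp (fun p : ℝ × ℝ => φhat p.1 p.2) 2 (volume.restrict upperHalfPlane2))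
    (hslice : ∀ z : ℝ, 0 < z → MemLp (fun x => φhat x z) 2 volume)
    (φ : ℝ → ℝ → ℝ)
    (hφ : ∀ x z : ℝ, φ x z
        = (1 / U) * ∫ ξ in Iic x, Real.exp (-(l / U) * (x - ξ)) * φhat ξ z) :
    (∀ x z : ℝ, 0 < z →
      DifferentiableAt ℝ (fun y => φ y z) x ∧
      l * φ x z + U * deriv (fun y => φ y z) x = φhat x z) ∧
    (MemLp (fun p : ℝ × ℝ => φ p.1 p.2) 2 (volume.restrict upperHalfPlane2) ∧
      eLpNorm (fun p : ℝ × ℝ => φ p.1 p.2) 2 (volume.restrict upperHalfPlane2)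
        ≤ ENNReal.ofReal (1 / l)
          * eLpNorm (fun p : ℝ × ℝ => φhat p.1 p.2) 2 (volume.restrict upperHalfPlane2)) ∧
    (MemLp (fun p : ℝ × ℝ => deriv (fun y => φ y p.2) p.1) 2
        (volume.restrict upperHalfPlane2) ∧
      eLpNorm (fun p : ℝ × ℝ => deriv (fun y => φ y p.2) p.1) 2
          (volume.restrict upperHalfPlane2)
        ≤ ENNReal.ofReal (2 / U)
          * eLpNorm (fun p : ℝ × ℝ => φhat p.1 p.2) 2 (volume.restrict upperHalfPlane2)) := by
  have hc : 0 < l / U := div_pos hl hU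
  have hφ_conv : ∀ x z, φ x z = 1 / U * causalExpConv (l / U) (fun ξ ↦ φhat ξ z) x := hφ
  have hderiv : ∀ x z, 0 < z →
      HasDerivAt (fun y ↦ φ y z) ((1 / U) * (φhat x z - l * φ x z)) x := fun x z hz ↦ by
    have hconv := hasDerivAt_causalExpConv (x := x)
      (integrableOn_exp_mul_mul_Iic hc (hslice z hz))
      (hcont.continuous_slice_upperHalfPlane2 hz).continuousAt
    rw [funext fun y ↦ hφ_conv y z]
    refine (hconv.const_mul (1 / U)).congr_deriv ?_
    rw [hφ_conv]
    ring
  have hφ_eq : (fun p : ℝ × ℝ ↦ φ p.1 p.2) =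
      (1 / U) • causalExpConvFst (l / U) fun p ↦ φhat p.1 p.2 :=
    funext fun p ↦ hφ_conv p.1 p.2
  set ν := volume.restrict upperHalfPlane2
  set N := eLpNorm (fun p : ℝ × ℝ ↦ φhat p.1 p.2) 2 ν
  obtain ⟨hconv_memLp, hconv_le⟩ := memLp_causalExpConvFst_upperHalfPlane2 hc hcont hsq
  have hφ_memLp : MemLp (fun p : ℝ × ℝ ↦ φ p.1 p.2) 2 ν := by
    rw [hφ_eq]; exact hconv_memLp.const_smul _
  have hφ_le : eLpNorm (fun p : ℝ × ℝ ↦ φ p.1 p.2) 2 ν ≤ ENNReal.ofReal (1 / l) * N := by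
    rw [hφ_eq, eLpNorm_const_smul, Real.enorm_eq_ofReal (by positivity)]
    calc _ ≤ ENNReal.ofReal (1 / U) * (ENNReal.ofReal (1 / (l / U)) * N) := by gcongr
      _ = ENNReal.ofReal (1 / l) * N := by
        rw [← mul_assoc, ← ENNReal.ofReal_mul (by positivity)]
        field_simp
  have hderiv_ae : (fun p : ℝ × ℝ ↦ deriv (fun y ↦ φ y p.2) p.1)
      =ᵐ[ν] (1 / U) • fun p : ℝ × ℝ ↦ φhat p.1 p.2 - l * φ p.1 p.2 := by
    filter_upwards [ae_restrict_mem isOpen_upperHalfPlane2.measurableSet] with p hp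
    exact (hderiv p.1 p.2 hp).deriv
  refine ⟨fun x z hz ↦ ⟨(hderiv x z hz).differentiableAt, ?_⟩, ⟨hφ_memLp, hφ_le⟩,
    ((hsq.sub (hφ_memLp.const_mul l)).const_smul _).ae_eq hderiv_ae.symm, ?_⟩
  · rw [(hderiv x z hz).deriv]
    field_simp
    ring
  · rw [eLpNorm_congr_ae hderiv_ae, eLpNorm_const_smul, Real.enorm_eq_ofReal (by positivity)]
    calc _ ≤ ENNReal.ofReal (1 / U) * (2 * N) := by
          gcongr
          exact eLpNorm_sub_const_mul_le_two_mul one_le_two hsq.1 hφ_memLp.1 hl hφ_le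
      _ = ENNReal.ofReal (2 / U) * N := by
        rw [← mul_assoc, ← ENNReal.ofReal_ofNat 2, ← ENNReal.ofReal_mul (by positivity)]
        field_simp
end

section
/- Let D > 0, L > 0, T > 0, let p be continuous on [0,L] × [0,T], and let w be a smooth function on [0,L] × [0,T] satisfying the nonlinear inextensible cantilever equation w_tt + D∂ₓ⁴w + D∂ₓ²(wₓ² w_xx) − D∂ₓ(w_xx² wₓ) = p on (0,L) × (0,T), together with the clamped–free boundary conditions w(0,t) = ∂ₓw(0,t) = 0 and ∂ₓ²w(L,t) = ∂ₓ³w(L,t) = 0 for all t ∈ [0,T]. Define E₀(t) = ½ ∫₀^L ( w_t² + D w_xx² + D wₓ² w_xx² ) dx. Then E₀ is differentiable on (0,T) and E₀'(t) = ∫₀^L p(x,t) w_t(x,t) dx for every t ∈ (0,T). -/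
open MeasureTheory Real Set intervalIntegral Filter Metric Topology

/-- Partial derivative in the spatial variable `x` of `w : (x,t) ↦ w(x,t)`. -/
noncomputable def dX (w : ℝ → ℝ → ℝ) : ℝ → ℝ → ℝ := fun x t => deriv (fun y => w y t) x

/-- Partial derivative in the time variable `t` of `w : (x,t) ↦ w(x,t)`. -/
noncomputable def dT (w : ℝ → ℝ → ℝ) : ℝ → ℝ → ℝ := fun x t => deriv (fun s => w x s) t

lemma sliceX_hasDerivAt {f : ℝ → ℝ → ℝ} (hf : ContDiff ℝ (⊤ : ℕ∞) fun q : ℝ × ℝ => f q.1 q.2)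
    (x t : ℝ) : HasDerivAt (fun y => f y t) (dX f x t) x := by
  have h : DifferentiableAt ℝ (fun y => f y t) x := by
    have h0 := (hf.differentiable (by simp) (x, t)).comp x
      (((differentiableAt_id : DifferentiableAt ℝ id x).prodMk (differentiableAt_const t)))
    exact h0
  exact h.hasDerivAt

lemma sliceT_hasDerivAt {f : ℝ → ℝ → ℝ} (hf : ContDiff ℝ (⊤ : ℕ∞) fun q : ℝ × ℝ => f q.1 q.2)
    (x t : ℝ) : HasDerivAt (fun s => f x s) (dT f x t) t := by
  have h : DifferentiableAt ℝ (fun s => f x s) t :=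
    (hf.differentiable (by simp) (x, t)).comp t
      ((differentiableAt_const x).prodMk differentiableAt_id)
  exact h.hasDerivAt

lemma dX_eq_fderiv {f : ℝ → ℝ → ℝ} (hf : ContDiff ℝ (⊤ : ℕ∞) fun q : ℝ × ℝ => f q.1 q.2)
    (q : ℝ × ℝ) : dX f q.1 q.2 = fderiv ℝ (fun q : ℝ × ℝ => f q.1 q.2) q ((1:ℝ), (0:ℝ)) := by
  have h : HasDerivAt (fun y => f y q.2)
      (fderiv ℝ (fun q : ℝ × ℝ => f q.1 q.2) q ((1:ℝ), (0:ℝ))) q.1 := by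
    have := ((hf.differentiable (by simp) q).hasFDerivAt).comp_hasDerivAt q.1
      ((hasDerivAt_id q.1).prodMk (hasDerivAt_const q.1 q.2))
    simpa [Function.comp_def] using this
  simp only [dX, dT]
  exact h.deriv

lemma dT_eq_fderiv {f : ℝ → ℝ → ℝ} (hf : ContDiff ℝ (⊤ : ℕ∞) fun q : ℝ × ℝ => f q.1 q.2)
    (q : ℝ × ℝ) : dT f q.1 q.2 = fderiv ℝ (fun q : ℝ × ℝ => f q.1 q.2) q ((0:ℝ), (1:ℝ)) := by
  have h : HasDerivAt (fun s => f q.1 s)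
      (fderiv ℝ (fun q : ℝ × ℝ => f q.1 q.2) q ((0:ℝ), (1:ℝ))) q.2 := by
    have := ((hf.differentiable (by simp) q).hasFDerivAt).comp_hasDerivAt q.2
      ((hasDerivAt_const q.2 q.1).prodMk (hasDerivAt_id q.2))
    simpa [Function.comp_def] using this
  simp only [dX, dT]
  exact h.deriv

lemma contDiff_dX {f : ℝ → ℝ → ℝ} (hf : ContDiff ℝ (⊤ : ℕ∞) fun q : ℝ × ℝ => f q.1 q.2) :
    ContDiff ℝ (⊤ : ℕ∞) fun q : ℝ × ℝ => dX f q.1 q.2 := by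
  have : (fun q : ℝ × ℝ => dX f q.1 q.2)
      = fun q : ℝ × ℝ => fderiv ℝ (fun q : ℝ × ℝ => f q.1 q.2) q ((1:ℝ), (0:ℝ)) :=
    funext fun q => dX_eq_fderiv hf q
  rw [this]
  exact (hf.fderiv_right (by simp)).clm_apply contDiff_const

lemma contDiff_dT {f : ℝ → ℝ → ℝ} (hf : ContDiff ℝ (⊤ : ℕ∞) fun q : ℝ × ℝ => f q.1 q.2) :
    ContDiff ℝ (⊤ : ℕ∞) fun q : ℝ × ℝ => dT f q.1 q.2 := by
  have : (fun q : ℝ × ℝ => dT f q.1 q.2)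
      = fun q : ℝ × ℝ => fderiv ℝ (fun q : ℝ × ℝ => f q.1 q.2) q ((0:ℝ), (1:ℝ)) :=
    funext fun q => dT_eq_fderiv hf q
  rw [this]
  exact (hf.fderiv_right (by simp)).clm_apply contDiff_const

lemma dXdT_swap {f : ℝ → ℝ → ℝ} (hf : ContDiff ℝ (⊤ : ℕ∞) fun q : ℝ × ℝ => f q.1 q.2)
    (x t : ℝ) : dT (dX f) x t = dX (dT f) x t := by
  set u : ℝ × ℝ → ℝ := fun q => f q.1 q.2 with hu
  have hu' : ContDiff ℝ (⊤ : ℕ∞) (fderiv ℝ u) := hf.fderiv_right (by simp)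
  have hd2 : ∀ q : ℝ × ℝ, HasFDerivAt (fderiv ℝ u) (fderiv ℝ (fderiv ℝ u) q) q :=
    fun q => (hu'.differentiable (by simp) q).hasFDerivAt
  -- dT (dX f) x t
  have h1 : dT (dX f) x t = fderiv ℝ (fderiv ℝ u) (x, t) ((0:ℝ),(1:ℝ)) ((1:ℝ),(0:ℝ)) := by
    have hrw : (fun s => dX f x s) = fun s => (fderiv ℝ u (x, s)) ((1:ℝ),(0:ℝ)) :=
      funext fun s => dX_eq_fderiv hf (x, s)
    have hcomp : HasDerivAt (fun s => (fderiv ℝ u (x, s)) ((1:ℝ),(0:ℝ)))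
        (fderiv ℝ (fderiv ℝ u) (x, t) ((0:ℝ),(1:ℝ)) ((1:ℝ),(0:ℝ))) t := by
      have h3 : HasDerivAt (fun s => fderiv ℝ u (x, s))
          (fderiv ℝ (fderiv ℝ u) (x, t) ((0:ℝ),(1:ℝ))) t := by
        have := (hd2 (x, t)).comp_hasDerivAt t
          ((hasDerivAt_const t x).prodMk (hasDerivAt_id t))
        simpa [Function.comp_def] using this
      have := (ContinuousLinearMap.apply ℝ ℝ ((1:ℝ),(0:ℝ))).hasFDerivAt.comp_hasDerivAt t h3
      simpa [Function.comp_def] using this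
    show deriv (fun s => dX f x s) t = _
    rw [hrw]
    exact hcomp.deriv
  have h2 : dX (dT f) x t = fderiv ℝ (fderiv ℝ u) (x, t) ((1:ℝ),(0:ℝ)) ((0:ℝ),(1:ℝ)) := by
    have hrw : (fun y => dT f y t) = fun y => (fderiv ℝ u (y, t)) ((0:ℝ),(1:ℝ)) :=
      funext fun y => dT_eq_fderiv hf (y, t)
    have hcomp : HasDerivAt (fun y => (fderiv ℝ u (y, t)) ((0:ℝ),(1:ℝ)))
        (fderiv ℝ (fderiv ℝ u) (x, t) ((1:ℝ),(0:ℝ)) ((0:ℝ),(1:ℝ))) x := by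
      have h3 : HasDerivAt (fun y => fderiv ℝ u (y, t))
          (fderiv ℝ (fderiv ℝ u) (x, t) ((1:ℝ),(0:ℝ))) x := by
        have := (hd2 (x, t)).comp_hasDerivAt x
          ((hasDerivAt_id x).prodMk (hasDerivAt_const x t))
        simpa [Function.comp_def] using this
      have := (ContinuousLinearMap.apply ℝ ℝ ((0:ℝ),(1:ℝ))).hasFDerivAt.comp_hasDerivAt x h3
      simpa [Function.comp_def] using this
    show deriv (fun y => dT f y t) x = _
    rw [hrw]
    exact hcomp.deriv
  rw [h1, h2]
  exact second_derivative_symmetric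
    (fun y => (hf.differentiable (by simp) y).hasFDerivAt) (hd2 (x, t)) _ _

lemma contSliceX {f : ℝ → ℝ → ℝ} (hf : Continuous fun q : ℝ × ℝ => f q.1 q.2) (t : ℝ) :
    Continuous fun x => f x t := hf.comp (continuous_id.prodMk continuous_const)

lemma hasDerivAt_param_integral {f : ℝ → ℝ → ℝ}
    (hf : ContDiff ℝ (⊤ : ℕ∞) fun q : ℝ × ℝ => f q.1 q.2) (a b t : ℝ) :
    HasDerivAt (fun s => ∫ x in a..b, f x s) (∫ x in a..b, dT f x t) t := by
  have hft := contDiff_dT hf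
  obtain ⟨C, hC⟩ : ∃ C, ∀ q ∈ (uIcc a b ×ˢ Icc (t - 1) (t + 1) : Set (ℝ × ℝ)),
      ‖dT f q.1 q.2‖ ≤ C :=
    (isCompact_uIcc.prod isCompact_Icc).exists_bound_of_continuousOn
      (hft.continuous.continuousOn)
  have main := intervalIntegral.hasDerivAt_integral_of_dominated_loc_of_deriv_le
    (F := fun s x => f x s) (F' := fun s x => dT f x s) (x₀ := t) (a := a) (b := b)
    (bound := fun _ => C) (μ := volume) (ball_mem_nhds t one_pos)
    (Eventually.of_forall fun s =>
      ((contSliceX hf.continuous s).comp continuous_id |>.aestronglyMeasurable))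
    ((contSliceX hf.continuous t).intervalIntegrable a b)
    ((contSliceX hft.continuous t).aestronglyMeasurable)
    (Eventually.of_forall fun x hx s hs => by
      refine hC (x, s) ⟨uIoc_subset_uIcc hx, ?_⟩
      have := mem_ball_iff_norm.mp hs
      rw [Real.norm_eq_abs, abs_lt] at this
      constructor <;> linarith)
    (intervalIntegrable_const)
    (Eventually.of_forall fun x _ s _ => sliceT_hasDerivAt hf x s)
  exact main.2

lemma ibp0 {L : ℝ} {f g f' g' : ℝ → ℝ}
    (hf : ∀ x ∈ uIcc (0:ℝ) L, HasDerivAt f (f' x) x)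
    (hg : ∀ x ∈ uIcc (0:ℝ) L, HasDerivAt g (g' x) x)
    (hf' : Continuous f') (hg' : Continuous g')
    (h0 : f 0 = 0) (hLb : g L = 0) :
    ∫ x in (0:ℝ)..L, f x * g' x = - ∫ x in (0:ℝ)..L, f' x * g x := by
  rw [intervalIntegral.integral_mul_deriv_eq_deriv_mul hf hg
    (hf'.intervalIntegrable 0 L) (hg'.intervalIntegrable 0 L), h0, hLb]
  ring

/-- Energy identity for the nonlinear inextensible cantilever
`w_tt + D∂ₓ⁴w + D∂ₓ²(wₓ² w_xx) − D∂ₓ(w_xx² wₓ) = p` on `(0,L) × (0,T)` with clamped–free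
boundary conditions: the baseline energy
`E₀(t) = ½ ∫₀^L (w_t² + D w_xx² + D wₓ² w_xx²) dx` is differentiable on `(0,T)` with
`E₀'(t) = ∫₀^L p w_t dx`. -/
theorem statement8
    (D L T : ℝ) (hD : 0 < D) (hL : 0 < L) (hT : 0 < T)
    (p : ℝ → ℝ → ℝ) (hp : Continuous fun q : ℝ × ℝ => p q.1 q.2)
    (w : ℝ → ℝ → ℝ) (hw : ContDiff ℝ (⊤ : ℕ∞) fun q : ℝ × ℝ => w q.1 q.2)
    (heq : ∀ x ∈ Ioo (0:ℝ) L, ∀ t ∈ Ioo (0:ℝ) T,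
      dT (dT w) x t + D * dX (dX (dX (dX w))) x t
        + D * dX (dX (fun y s => (dX w y s) ^ 2 * dX (dX w) y s)) x t
        - D * dX (fun y s => (dX (dX w) y s) ^ 2 * dX w y s) x t = p x t)
    (hclamped : ∀ t ∈ Icc (0:ℝ) T, w 0 t = 0 ∧ dX w 0 t = 0)
    (hfree : ∀ t ∈ Icc (0:ℝ) T, dX (dX w) L t = 0 ∧ dX (dX (dX w)) L t = 0)
    (E₀ : ℝ → ℝ)
    (hE₀ : ∀ t : ℝ, E₀ t = (1 / 2) * ∫ x in (0:ℝ)..L,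
      ((dT w x t) ^ 2 + D * (dX (dX w) x t) ^ 2
        + D * (dX w x t) ^ 2 * (dX (dX w) x t) ^ 2)) :
    ∀ t ∈ Ioo (0:ℝ) T, HasDerivAt E₀ (∫ x in (0:ℝ)..L, p x t * dT w x t) t := by
  intro t ht
  have htI : t ∈ Icc (0:ℝ) T := Ioo_subset_Icc_self ht
  -- smoothness stash
  have cx1 := contDiff_dX hw
  have cx2 := contDiff_dX cx1
  have cx3 := contDiff_dX cx2
  have cx4 := contDiff_dX cx3
  have ct  := contDiff_dT hw
  have ctx := contDiff_dX ct
  have ctxx := contDiff_dX ctx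
  have cG1 : ContDiff ℝ (⊤ : ℕ∞) fun q : ℝ × ℝ =>
      (fun y s => (dX w y s) ^ 2 * dX (dX w) y s) q.1 q.2 := (cx1.pow 2).mul cx2
  have cG1x := contDiff_dX (f := fun y s => (dX w y s) ^ 2 * dX (dX w) y s) cG1
  have cG1xx := contDiff_dX (f := dX (fun y s => (dX w y s) ^ 2 * dX (dX w) y s)) cG1x
  have cG2 : ContDiff ℝ (⊤ : ℕ∞) fun q : ℝ × ℝ =>
      (fun y s => (dX (dX w) y s) ^ 2 * dX w y s) q.1 q.2 := (cx2.pow 2).mul cx1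
  have cG2x := contDiff_dX (f := fun y s => (dX (dX w) y s) ^ 2 * dX w y s) cG2
  have cg : ContDiff ℝ (⊤ : ℕ∞) fun q : ℝ × ℝ =>
      (fun x s => (dT w x s) ^ 2 + D * (dX (dX w) x s) ^ 2
        + D * (dX w x s) ^ 2 * (dX (dX w) x s) ^ 2) q.1 q.2 :=
    ((ct.pow 2).add (contDiff_const.mul (cx2.pow 2))).add
      ((contDiff_const.mul (cx1.pow 2)).mul (cx2.pow 2))
  -- swaps
  have swap1 : ∀ y s, dT (dX w) y s = dX (dT w) y s := fun y s => dXdT_swap hw y s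
  have swapfun : dT (dX w) = dX (dT w) := funext fun y => funext fun s => swap1 y s
  have swap2 : ∀ y s, dT (dX (dX w)) y s = dX (dX (dT w)) y s := by
    intro y s
    rw [dXdT_swap cx1 y s, swapfun]
  -- boundary values
  have hv0 : dT w 0 t = 0 := by
    have hev : (fun s => w 0 s) =ᶠ[𝓝 t] fun _ => (0:ℝ) := by
      filter_upwards [Ioo_mem_nhds ht.1 ht.2] with s hs
      exact (hclamped s (Ioo_subset_Icc_self hs)).1
    show deriv (fun s => w 0 s) t = 0
    rw [hev.deriv_eq]; simp
  have hvx0 : dX (dT w) 0 t = 0 := by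
    rw [← swap1]
    have hev : (fun s => dX w 0 s) =ᶠ[𝓝 t] fun _ => (0:ℝ) := by
      filter_upwards [Ioo_mem_nhds ht.1 ht.2] with s hs
      exact (hclamped s (Ioo_subset_Icc_self hs)).2
    show deriv (fun s => dX w 0 s) t = 0
    rw [hev.deriv_eq]; simp
  have hw2L : dX (dX w) L t = 0 := (hfree t htI).1
  have hw3L : dX (dX (dX w)) L t = 0 := (hfree t htI).2
  -- product-rule expansion for dX G1
  have hG1x : ∀ x s, dX (fun y s => (dX w y s) ^ 2 * dX (dX w) y s) x s
      = (2 * dX w x s ^ 1 * dX (dX w) x s) * dX (dX w) x s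
        + (dX w x s) ^ 2 * dX (dX (dX w)) x s := by
    intro x s
    simp only [dX]
    exact (((sliceX_hasDerivAt cx1 x s).pow 2).mul (sliceX_hasDerivAt cx2 x s)).deriv
  have hG1xL : dX (fun y s => (dX w y s) ^ 2 * dX (dX w) y s) L t = 0 := by
    rw [hG1x, hw2L, hw3L]; ring
  have hG1L : (dX w L t) ^ 2 * dX (dX w) L t = 0 := by rw [hw2L]; ring
  have hG2L : (dX (dX w) L t) ^ 2 * dX w L t = 0 := by rw [hw2L]; ring
  -- derivative of the energy via differentiation under the integral sign
  have hE : HasDerivAt E₀ ((1/2) * ∫ x in (0:ℝ)..L,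
      dT (fun x s => (dT w x s) ^ 2 + D * (dX (dX w) x s) ^ 2
        + D * (dX w x s) ^ 2 * (dX (dX w) x s) ^ 2) x t) t := by
    have h := (hasDerivAt_param_integral (f := fun x s => (dT w x s) ^ 2 + D * (dX (dX w) x s) ^ 2 + D * (dX w x s) ^ 2 * (dX (dX w) x s) ^ 2) cg 0 L t).const_mul (1/2 : ℝ)
    have hEfun : E₀ = fun s => (1/2) * ∫ x in (0:ℝ)..L,
        ((dT w x s) ^ 2 + D * (dX (dX w) x s) ^ 2
          + D * (dX w x s) ^ 2 * (dX (dX w) x s) ^ 2) := funext hE₀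
    rw [hEfun]
    exact h
  -- pointwise time derivative of the energy density
  have hdTg : ∀ x : ℝ, dT (fun x s => (dT w x s) ^ 2 + D * (dX (dX w) x s) ^ 2
        + D * (dX w x s) ^ 2 * (dX (dX w) x s) ^ 2) x t
      = 2 * (dT w x t * dT (dT w) x t)
        + 2 * D * (dX (dX w) x t * dX (dX (dT w)) x t)
        + 2 * D * (dX w x t * dX (dT w) x t * (dX (dX w) x t) ^ 2)
        + 2 * D * ((dX w x t) ^ 2 * dX (dX w) x t * dX (dX (dT w)) x t) := by
    intro x
    have hA : HasDerivAt (fun s => dT w x s) (dT (dT w) x t) t := sliceT_hasDerivAt ct x t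
    have hB : HasDerivAt (fun s => dX (dX w) x s) (dX (dX (dT w)) x t) t := by
      have := sliceT_hasDerivAt cx2 x t; rwa [swap2] at this
    have hC : HasDerivAt (fun s => dX w x s) (dX (dT w) x t) t := by
      have := sliceT_hasDerivAt cx1 x t; rwa [swap1] at this
    have H := ((hA.pow 2).add ((hB.pow 2).const_mul D)).add
      (((hC.pow 2).const_mul D).mul (hB.pow 2))
    show deriv (fun s => (dT w x s) ^ 2 + D * (dX (dX w) x s) ^ 2
      + D * (dX w x s) ^ 2 * (dX (dX w) x s) ^ 2) t = _
    refine H.deriv.trans ?_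
    norm_num only [Pi.pow_apply]
    ring
  -- the entropy production term, shown to integrate to zero by parts
  set S : ℝ → ℝ := fun x =>
      D * (dX (dX w) x t * dX (dX (dT w)) x t - dT w x t * dX (dX (dX (dX w))) x t)
    + D * ((dX w x t) ^ 2 * dX (dX w) x t * dX (dX (dT w)) x t
        - dT w x t * dX (dX (fun y s => (dX w y s) ^ 2 * dX (dX w) y s)) x t)
    + D * (dX w x t * dX (dT w) x t * (dX (dX w) x t) ^ 2
        + dT w x t * dX (fun y s => (dX (dX w) y s) ^ 2 * dX w y s) x t) with hSdef
  -- continuity of all slices at time t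
  have cv : Continuous fun x => dT w x t := contSliceX ct.continuous t
  have cv' : Continuous fun x => dX (dT w) x t := contSliceX ctx.continuous t
  have cv'' : Continuous fun x => dX (dX (dT w)) x t := contSliceX ctxx.continuous t
  have cw1 : Continuous fun x => dX w x t := contSliceX cx1.continuous t
  have cw2 : Continuous fun x => dX (dX w) x t := contSliceX cx2.continuous t
  have cw3 : Continuous fun x => dX (dX (dX w)) x t := contSliceX cx3.continuous t
  have cw4 : Continuous fun x => dX (dX (dX (dX w))) x t := contSliceX cx4.continuous t
  have cg1 : Continuous fun x => (dX w x t) ^ 2 * dX (dX w) x t :=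
    contSliceX (f := fun y s => (dX w y s) ^ 2 * dX (dX w) y s) cG1.continuous t
  have cg1x : Continuous fun x => dX (fun y s => (dX w y s) ^ 2 * dX (dX w) y s) x t :=
    contSliceX cG1x.continuous t
  have cg1xx : Continuous fun x =>
      dX (dX (fun y s => (dX w y s) ^ 2 * dX (dX w) y s)) x t := contSliceX cG1xx.continuous t
  have cg2 : Continuous fun x => (dX (dX w) x t) ^ 2 * dX w x t :=
    contSliceX (f := fun y s => (dX (dX w) y s) ^ 2 * dX w y s) cG2.continuous t
  have cg2x : Continuous fun x => dX (fun y s => (dX (dX w) y s) ^ 2 * dX w y s) x t :=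
    contSliceX cG2x.continuous t
  have cS : Continuous S := by
    rw [hSdef]
    fun_prop
  have cpv : Continuous fun x => p x t * dT w x t := (contSliceX hp t).mul cv
  -- integration by parts identities
  have e1 : ∫ x in (0:ℝ)..L, dT w x t * dX (dX (dX (dX w))) x t
      = - ∫ x in (0:ℝ)..L, dX (dT w) x t * dX (dX (dX w)) x t :=
    ibp0 (fun x _ => sliceX_hasDerivAt ct x t) (fun x _ => sliceX_hasDerivAt cx3 x t)
      cv' cw4 hv0 hw3L
  have e2 : ∫ x in (0:ℝ)..L, dX (dT w) x t * dX (dX (dX w)) x t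
      = - ∫ x in (0:ℝ)..L, dX (dX (dT w)) x t * dX (dX w) x t :=
    ibp0 (fun x _ => sliceX_hasDerivAt ctx x t) (fun x _ => sliceX_hasDerivAt cx2 x t)
      cv'' cw3 hvx0 hw2L
  have f1 : ∫ x in (0:ℝ)..L, dT w x t
        * dX (dX (fun y s => (dX w y s) ^ 2 * dX (dX w) y s)) x t
      = - ∫ x in (0:ℝ)..L, dX (dT w) x t
        * dX (fun y s => (dX w y s) ^ 2 * dX (dX w) y s) x t :=
    ibp0 (fun x _ => sliceX_hasDerivAt ct x t) (fun x _ => sliceX_hasDerivAt cG1x x t)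
      cv' cg1xx hv0 hG1xL
  have f2 : ∫ x in (0:ℝ)..L, dX (dT w) x t
        * dX (fun y s => (dX w y s) ^ 2 * dX (dX w) y s) x t
      = - ∫ x in (0:ℝ)..L, dX (dX (dT w)) x t * ((dX w x t) ^ 2 * dX (dX w) x t) :=
    ibp0 (fun x _ => sliceX_hasDerivAt ctx x t)
      (fun x _ => sliceX_hasDerivAt (f := fun y s => (dX w y s) ^ 2 * dX (dX w) y s) cG1 x t)
      cv'' cg1x hvx0 hG1L
  have f3 : ∫ x in (0:ℝ)..L, dT w x t
        * dX (fun y s => (dX (dX w) y s) ^ 2 * dX w y s) x t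
      = - ∫ x in (0:ℝ)..L, dX (dT w) x t * ((dX (dX w) x t) ^ 2 * dX w x t) :=
    ibp0 (fun x _ => sliceX_hasDerivAt ct x t)
      (fun x _ => sliceX_hasDerivAt (f := fun y s => (dX (dX w) y s) ^ 2 * dX w y s) cG2 x t)
      cv' cg2x hv0 hG2L
  -- the integral of S vanishes
  have hSzero : (∫ x in (0:ℝ)..L, S x) = 0 := by
    have i1 : ∫ x in (0:ℝ)..L,
        (dX (dX w) x t * dX (dX (dT w)) x t - dT w x t * dX (dX (dX (dX w))) x t) = 0 := by
      rw [intervalIntegral.integral_sub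
        (f := fun x => dX (dX w) x t * dX (dX (dT w)) x t)
        (g := fun x => dT w x t * dX (dX (dX (dX w))) x t) ((cw2.mul cv'').intervalIntegrable 0 L)
        ((cv.mul cw4).intervalIntegrable 0 L), e1, e2, neg_neg,
        intervalIntegral.integral_congr (g := fun x => dX (dX (dT w)) x t * dX (dX w) x t)
          (fun x _ => mul_comm _ _)]
      ring
    have i2 : ∫ x in (0:ℝ)..L,
        ((dX w x t) ^ 2 * dX (dX w) x t * dX (dX (dT w)) x t
          - dT w x t * dX (dX (fun y s => (dX w y s) ^ 2 * dX (dX w) y s)) x t) = 0 := by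
      rw [intervalIntegral.integral_sub
        (f := fun x => (dX w x t) ^ 2 * dX (dX w) x t * dX (dX (dT w)) x t)
        (g := fun x => dT w x t * dX (dX (fun y s => (dX w y s) ^ 2 * dX (dX w) y s)) x t)
        (((cg1).mul cv'').intervalIntegrable 0 L)
        ((cv.mul cg1xx).intervalIntegrable 0 L), f1, f2, neg_neg,
        intervalIntegral.integral_congr
          (g := fun x => dX (dX (dT w)) x t * ((dX w x t) ^ 2 * dX (dX w) x t))
          (fun x _ => mul_comm _ _)]
      ring
    have i3 : ∫ x in (0:ℝ)..L,
        (dX w x t * dX (dT w) x t * (dX (dX w) x t) ^ 2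
          + dT w x t * dX (fun y s => (dX (dX w) y s) ^ 2 * dX w y s) x t) = 0 := by
      rw [intervalIntegral.integral_add
        (f := fun x => dX w x t * dX (dT w) x t * (dX (dX w) x t) ^ 2)
        (g := fun x => dT w x t * dX (fun y s => (dX (dX w) y s) ^ 2 * dX w y s) x t)
        (((cw1.mul cv').mul (cw2.pow 2)).intervalIntegrable 0 L)
        ((cv.mul cg2x).intervalIntegrable 0 L), f3,
        intervalIntegral.integral_congr
          (f := fun x => dX w x t * dX (dT w) x t * (dX (dX w) x t) ^ 2)
          (g := fun x => dX (dT w) x t * ((dX (dX w) x t) ^ 2 * dX w x t))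
          (fun x _ => by ring)]
      ring
    rw [hSdef]
    rw [intervalIntegral.integral_add (Continuous.intervalIntegrable (by fun_prop) 0 L)
        (Continuous.intervalIntegrable (by fun_prop) 0 L),
      intervalIntegral.integral_add (Continuous.intervalIntegrable (by fun_prop) 0 L)
        (Continuous.intervalIntegrable (by fun_prop) 0 L),
      intervalIntegral.integral_const_mul, intervalIntegral.integral_const_mul,
      intervalIntegral.integral_const_mul, i1, i2, i3]
    ring
  -- identify the derivative value
  have key : (1/2) * (∫ x in (0:ℝ)..L,
      dT (fun x s => (dT w x s) ^ 2 + D * (dX (dX w) x s) ^ 2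
        + D * (dX w x s) ^ 2 * (dX (dX w) x s) ^ 2) x t)
      = ∫ x in (0:ℝ)..L, p x t * dT w x t := by
    have hae : ∀ᵐ x : ℝ, x ∈ uIoc (0:ℝ) L → x ∈ Ioo (0:ℝ) L := by
      have hne : ∀ᵐ x : ℝ, x ≠ L := by
        rw [ae_iff]
        have : {x : ℝ | ¬x ≠ L} = {L} := by ext x; simp
        rw [this]
        exact Real.volume_singleton
      filter_upwards [hne] with x hx hxI
      rw [uIoc_of_le hL.le] at hxI
      exact ⟨hxI.1, lt_of_le_of_ne hxI.2 hx⟩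
    have hcongr : ∫ x in (0:ℝ)..L,
        (1/2 : ℝ) * dT (fun x s => (dT w x s) ^ 2 + D * (dX (dX w) x s) ^ 2
          + D * (dX w x s) ^ 2 * (dX (dX w) x s) ^ 2) x t
        = ∫ x in (0:ℝ)..L, (p x t * dT w x t + S x) := by
      apply intervalIntegral.integral_congr_ae
      filter_upwards [hae] with x hxI hx
      have hpde := heq x (hxI hx) t ht
      rw [hdTg x, hSdef]
      linear_combination dT w x t * hpde
    rw [← intervalIntegral.integral_const_mul, hcongr,
      intervalIntegral.integral_add (cpv.intervalIntegrable 0 L) (cS.intervalIntegrable 0 L),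
      hSzero, add_zero]
  rwa [key] at hE
end

section
/- Let D > 0, L > 0, T > 0, let p be continuous on [0,L] × [0,T], and let w be a smooth function on [0,L] × [0,T] satisfying w_tt + D∂ₓ⁴w + D∂ₓ²(wₓ² w_xx) − D∂ₓ(w_xx² wₓ) = p on (0,L) × (0,T) with the clamped–free boundary conditions w(0,t) = ∂ₓw(0,t) = 0 and ∂ₓ²w(L,t) = ∂ₓ³w(L,t) = 0 for all t ∈ [0,T]. Define E₀(t) = ½ ∫₀^L ( w_t² + D w_xx² + D wₓ² w_xx² ) dx. Then for every t ∈ [0,T], E₀(t) ≤ ( E₀(0) + ½ ∫₀^t ∫₀^L p(x,τ)² dx dτ ) · e^{t}. -/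
open MeasureTheory Real Set intervalIntegral

noncomputable def pX (G : ℝ × ℝ → ℝ) : ℝ × ℝ → ℝ := fun q => fderiv ℝ G q (1, 0)
noncomputable def pT (G : ℝ × ℝ → ℝ) : ℝ × ℝ → ℝ := fun q => fderiv ℝ G q (0, 1)

lemma hasDerivAt_pX {G : ℝ × ℝ → ℝ} (hG : ContDiff ℝ (⊤ : ℕ∞) G) (x t : ℝ) :
    HasDerivAt (fun y => G (y, t)) (pX G (x, t)) x := by
  have h1 : HasDerivAt (fun y : ℝ => ((y, t) : ℝ × ℝ)) ((1 : ℝ), (0 : ℝ)) x := by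
    simpa using (hasDerivAt_id x).prodMk (hasDerivAt_const x t)
  exact (hG.differentiable (by simp) (x, t)).hasFDerivAt.comp_hasDerivAt x h1

lemma hasDerivAt_pT {G : ℝ × ℝ → ℝ} (hG : ContDiff ℝ (⊤ : ℕ∞) G) (x t : ℝ) :
    HasDerivAt (fun s => G (x, s)) (pT G (x, t)) t := by
  have h1 : HasDerivAt (fun s : ℝ => ((x, s) : ℝ × ℝ)) ((0 : ℝ), (1 : ℝ)) t := by
    simpa using (hasDerivAt_const t x).prodMk (hasDerivAt_id t)
  exact (hG.differentiable (by simp) (x, t)).hasFDerivAt.comp_hasDerivAt t h1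

lemma contDiff_pX {G : ℝ × ℝ → ℝ} (hG : ContDiff ℝ (⊤ : ℕ∞) G) : ContDiff ℝ (⊤ : ℕ∞) (pX G) :=
  (hG.fderiv_right (by simp)).clm_apply contDiff_const

lemma contDiff_pT {G : ℝ × ℝ → ℝ} (hG : ContDiff ℝ (⊤ : ℕ∞) G) : ContDiff ℝ (⊤ : ℕ∞) (pT G) :=
  (hG.fderiv_right (by simp)).clm_apply contDiff_const

lemma dX_curry {G : ℝ × ℝ → ℝ} (hG : ContDiff ℝ (⊤ : ℕ∞) G) :
    dX (fun x t => G (x, t)) = fun x t => pX G (x, t) := by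
  funext x t; exact (hasDerivAt_pX hG x t).deriv

lemma dT_curry {G : ℝ × ℝ → ℝ} (hG : ContDiff ℝ (⊤ : ℕ∞) G) :
    dT (fun x t => G (x, t)) = fun x t => pT G (x, t) := by
  funext x t; exact (hasDerivAt_pT hG x t).deriv

lemma clairaut {G : ℝ × ℝ → ℝ} (hG : ContDiff ℝ (⊤ : ℕ∞) G) : pX (pT G) = pT (pX G) := by
  funext q
  have hdG : Differentiable ℝ G := hG.differentiable (by simp)
  have hd2 : Differentiable ℝ (fderiv ℝ G) := (hG.fderiv_right (m := (⊤ : ℕ∞)) (by simp)).differentiable (by simp)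
  have hsymm := second_derivative_symmetric (f := G) (f' := fderiv ℝ G)
    (f'' := fderiv ℝ (fderiv ℝ G) q) (fun y => (hdG y).hasFDerivAt) (hd2 q).hasFDerivAt
  have e1 : pX (pT G) q = fderiv ℝ (fderiv ℝ G) q (1, 0) (0, 1) := by
    have h : pT G = fun r => fderiv ℝ G r (0, 1) := rfl
    rw [pX, h, fderiv_clm_apply (hd2 q) (differentiableAt_const _)]
    simp
  have e2 : pT (pX G) q = fderiv ℝ (fderiv ℝ G) q (0, 1) (1, 0) := by
    have h : pX G = fun r => fderiv ℝ G r (1, 0) := rfl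
    rw [pT, h, fderiv_clm_apply (hd2 q) (differentiableAt_const _)]
    simp
  rw [e1, e2, hsymm]

lemma cont_slice {G : ℝ × ℝ → ℝ} (hG : Continuous G) (t : ℝ) :
    Continuous fun x => G (x, t) :=
  hG.comp (continuous_id.prodMk continuous_const)

lemma ibp_smooth {G H : ℝ × ℝ → ℝ} (hG : ContDiff ℝ (⊤ : ℕ∞) G) (hH : ContDiff ℝ (⊤ : ℕ∞) H)
    (a b t : ℝ) :
    ∫ x in a..b, G (x, t) * pX H (x, t)
      = G (b, t) * H (b, t) - G (a, t) * H (a, t) - ∫ x in a..b, pX G (x, t) * H (x, t) := by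
  apply intervalIntegral.integral_mul_deriv_eq_deriv_mul
    (u := fun x => G (x, t)) (v := fun x => H (x, t))
    (u' := fun x => pX G (x, t)) (v' := fun x => pX H (x, t))
  · exact fun x _ => hasDerivAt_pX hG x t
  · exact fun x _ => hasDerivAt_pX hH x t
  · exact (cont_slice (contDiff_pX hG).continuous t).intervalIntegrable a b
  · exact (cont_slice (contDiff_pX hH).continuous t).intervalIntegrable a b

lemma hasDerivAt_parametric {e e' : ℝ × ℝ → ℝ} (he : Continuous e) (he' : Continuous e')
    (hd : ∀ x t, HasDerivAt (fun s => e (x, s)) (e' (x, t)) t) (L t₀ : ℝ) :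
    HasDerivAt (fun t => ∫ x in (0:ℝ)..L, e (x, t)) (∫ x in (0:ℝ)..L, e' (x, t₀)) t₀ := by
  have hK : IsCompact ((uIcc (0:ℝ) L) ×ˢ Icc (t₀ - 1) (t₀ + 1)) :=
    isCompact_uIcc.prod isCompact_Icc
  obtain ⟨C, hC⟩ := hK.exists_bound_of_continuousOn he'.continuousOn
  have main := intervalIntegral.hasDerivAt_integral_of_dominated_loc_of_deriv_le
    (F := fun t x => e (x, t)) (F' := fun t x => e' (x, t)) (x₀ := t₀)
    (a := 0) (b := L) (μ := volume) (bound := fun _ => C)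
    (s := Metric.ball t₀ 1) (Metric.ball_mem_nhds t₀ one_pos)
    (Filter.Eventually.of_forall fun t =>
      ((he.comp (continuous_id.prodMk continuous_const)).aestronglyMeasurable))
    (((he.comp (continuous_id.prodMk continuous_const))).intervalIntegrable 0 L)
    ((he'.comp (continuous_id.prodMk continuous_const)).aestronglyMeasurable)
    (Filter.Eventually.of_forall fun x hx t ht => by
      apply hC
      constructor
      · exact uIoc_subset_uIcc hx
      · have : |t - t₀| < 1 := by simpa [Real.dist_eq] using ht
        constructor <;> [linarith [abs_lt.mp this |>.1]; linarith [abs_lt.mp this |>.2]])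
    (intervalIntegrable_const)
    (Filter.Eventually.of_forall fun x _ t _ => hd x t)
  exact main.2

lemma gronwall_aux {f g : ℝ → ℝ} {T : ℝ}
    (hfc : ContinuousOn f (Icc 0 T)) (hgc : ContinuousOn g (Icc 0 T)) (hg0 : g 0 = 0)
    (hder : ∀ t ∈ Ioo (0:ℝ) T, ∃ f' g' : ℝ,
      HasDerivAt f f' t ∧ HasDerivAt g g' t ∧ 0 ≤ g' ∧ f' ≤ f t + g') :
    ∀ t ∈ Icc (0:ℝ) T, f t ≤ (f 0 + g t) * Real.exp t := by
  set ψ : ℝ → ℝ := fun t => Real.exp (-t) * f t - g t with hψ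
  have hψc : ContinuousOn ψ (Icc 0 T) :=
    (((Real.continuous_exp.comp continuous_neg).continuousOn).mul hfc).sub hgc
  have hanti : AntitoneOn ψ (Icc 0 T) := by
    apply antitoneOn_of_deriv_nonpos (convex_Icc 0 T) hψc
    · intro t ht
      rw [interior_Icc] at ht
      obtain ⟨f', g', hf', hg', _, _⟩ := hder t ht
      exact (((((Real.hasDerivAt_exp (-t)).comp t (hasDerivAt_neg t)).mul hf').sub
        hg')).differentiableAt.differentiableWithinAt
    · intro t ht
      rw [interior_Icc] at ht
      obtain ⟨f', g', hf', hg', hg'0, hle⟩ := hder t ht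
      have hd : HasDerivAt ψ (Real.exp (-t) * (-1) * f t + Real.exp (-t) * f' - g') t := by
        exact ((((Real.hasDerivAt_exp (-t)).comp t (hasDerivAt_neg t)).mul hf').sub hg')
      rw [hd.deriv]
      have h1 : Real.exp (-t) ≤ 1 := Real.exp_le_one_iff.mpr (by linarith [ht.1])
      nlinarith [Real.exp_pos (-t), mul_le_mul_of_nonneg_left hle (Real.exp_pos (-t)).le]
  intro t ht
  have h0 : (0:ℝ) ∈ Icc (0:ℝ) T := ⟨le_rfl, le_trans ht.1 ht.2⟩
  have h2 := hanti h0 ht ht.1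
  simp only [hψ, neg_zero, Real.exp_zero, one_mul, hg0, sub_zero] at h2
  have hexp : (0:ℝ) < Real.exp t := Real.exp_pos t
  have h3 : Real.exp (-t) * f t ≤ f 0 + g t := by linarith
  calc f t = Real.exp t * (Real.exp (-t) * f t) := by
        rw [← mul_assoc, ← Real.exp_add]; simp
    _ ≤ Real.exp t * (f 0 + g t) := by nlinarith
    _ = (f 0 + g t) * Real.exp t := by ring


lemma integral_comb4 {f1 f2 f3 f4 : ℝ → ℝ} (c1 c2 c3 c4 : ℝ) {a b : ℝ}
    (h1 : Continuous f1) (h2 : Continuous f2) (h3 : Continuous f3) (h4 : Continuous f4) :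
    ∫ x in a..b, (c1 * f1 x + c2 * f2 x + c3 * f3 x + c4 * f4 x)
      = c1 * (∫ x in a..b, f1 x) + c2 * (∫ x in a..b, f2 x)
        + c3 * (∫ x in a..b, f3 x) + c4 * (∫ x in a..b, f4 x) := by
  have i1 : IntervalIntegrable (fun x => c1 * f1 x) volume a b :=
    (continuous_const.mul h1).intervalIntegrable a b
  have i2 : IntervalIntegrable (fun x => c2 * f2 x) volume a b :=
    (continuous_const.mul h2).intervalIntegrable a b
  have i3 : IntervalIntegrable (fun x => c3 * f3 x) volume a b :=
    (continuous_const.mul h3).intervalIntegrable a b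
  have i4 : IntervalIntegrable (fun x => c4 * f4 x) volume a b :=
    (continuous_const.mul h4).intervalIntegrable a b
  rw [intervalIntegral.integral_add ((i1.add i2).add i3) i4,
    intervalIntegral.integral_add (i1.add i2) i3,
    intervalIntegral.integral_add i1 i2,
    intervalIntegral.integral_const_mul, intervalIntegral.integral_const_mul,
    intervalIntegral.integral_const_mul, intervalIntegral.integral_const_mul]

lemma integral_comb2 {f1 f2 : ℝ → ℝ} (c1 c2 : ℝ) {a b : ℝ}
    (h1 : Continuous f1) (h2 : Continuous f2) :
    ∫ x in a..b, (c1 * f1 x + c2 * f2 x)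
      = c1 * (∫ x in a..b, f1 x) + c2 * (∫ x in a..b, f2 x) := by
  have i1 : IntervalIntegrable (fun x => c1 * f1 x) volume a b :=
    (continuous_const.mul h1).intervalIntegrable a b
  have i2 : IntervalIntegrable (fun x => c2 * f2 x) volume a b :=
    (continuous_const.mul h2).intervalIntegrable a b
  rw [intervalIntegral.integral_add i1 i2,
    intervalIntegral.integral_const_mul, intervalIntegral.integral_const_mul]

/-- Energy bound for the nonlinear inextensible cantilever
`w_tt + D∂ₓ⁴w + D∂ₓ²(wₓ² w_xx) − D∂ₓ(w_xx² wₓ) = p` on `(0,L) × (0,T)` with clamped–free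
boundary conditions: the baseline energy
`E₀(t) = ½ ∫₀^L (w_t² + D w_xx² + D wₓ² w_xx²) dx` satisfies, for every `t ∈ [0,T]`,
`E₀(t) ≤ (E₀(0) + ½ ∫₀^t ∫₀^L p² dx dτ)·e^t`. -/
theorem statement9
    (D L T : ℝ) (hD : 0 < D) (hL : 0 < L) (hT : 0 < T)
    (p : ℝ → ℝ → ℝ) (hp : Continuous fun q : ℝ × ℝ => p q.1 q.2)
    (w : ℝ → ℝ → ℝ) (hw : ContDiff ℝ (⊤ : ℕ∞) fun q : ℝ × ℝ => w q.1 q.2)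
    (heq : ∀ x ∈ Ioo (0:ℝ) L, ∀ t ∈ Ioo (0:ℝ) T,
      dT (dT w) x t + D * dX (dX (dX (dX w))) x t
        + D * dX (dX (fun y s => (dX w y s) ^ 2 * dX (dX w) y s)) x t
        - D * dX (fun y s => (dX (dX w) y s) ^ 2 * dX w y s) x t = p x t)
    (hclamped : ∀ t ∈ Icc (0:ℝ) T, w 0 t = 0 ∧ dX w 0 t = 0)
    (hfree : ∀ t ∈ Icc (0:ℝ) T, dX (dX w) L t = 0 ∧ dX (dX (dX w)) L t = 0)
    (E₀ : ℝ → ℝ)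
    (hE₀ : ∀ t : ℝ, E₀ t = (1 / 2) * ∫ x in (0:ℝ)..L,
      ((dT w x t) ^ 2 + D * (dX (dX w) x t) ^ 2
        + D * (dX w x t) ^ 2 * (dX (dX w) x t) ^ 2)) :
    ∀ t ∈ Icc (0:ℝ) T,
      E₀ t ≤ (E₀ 0 + (1 / 2) * ∫ τ in (0:ℝ)..t, ∫ x in (0:ℝ)..L, (p x τ) ^ 2)
        * Real.exp t := by
  -- notation
  set F : ℝ × ℝ → ℝ := fun q => w q.1 q.2 with hFdef
  have hFs : ContDiff ℝ (⊤ : ℕ∞) F := hw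
  set A1 : ℝ × ℝ → ℝ := pX F with hA1def
  set A2 : ℝ × ℝ → ℝ := pX A1 with hA2def
  set A3 : ℝ × ℝ → ℝ := pX A2 with hA3def
  set A4 : ℝ × ℝ → ℝ := pX A3 with hA4def
  set V : ℝ × ℝ → ℝ := pT F with hVdef
  have hA1s : ContDiff ℝ (⊤ : ℕ∞) A1 := contDiff_pX hFs
  have hA2s : ContDiff ℝ (⊤ : ℕ∞) A2 := contDiff_pX hA1s
  have hA3s : ContDiff ℝ (⊤ : ℕ∞) A3 := contDiff_pX hA2s
  have hA4s : ContDiff ℝ (⊤ : ℕ∞) A4 := contDiff_pX hA3s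
  have hVs : ContDiff ℝ (⊤ : ℕ∞) V := contDiff_pT hFs
  set N1 : ℝ × ℝ → ℝ := fun q => (A1 q) ^ 2 * A2 q with hN1def
  set N2 : ℝ × ℝ → ℝ := fun q => (A2 q) ^ 2 * A1 q with hN2def
  have hN1s : ContDiff ℝ (⊤ : ℕ∞) N1 := (hA1s.pow 2).mul hA2s
  have hN2s : ContDiff ℝ (⊤ : ℕ∞) N2 := (hA2s.pow 2).mul hA1s
  -- identification of dX/dT with pX/pT
  have hdX1 : dX w = fun x t => A1 (x, t) := dX_curry hFs
  have hdX2 : dX (dX w) = fun x t => A2 (x, t) := by rw [hdX1]; exact dX_curry hA1s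
  have hdX3 : dX (dX (dX w)) = fun x t => A3 (x, t) := by rw [hdX2]; exact dX_curry hA2s
  have hdX4 : dX (dX (dX (dX w))) = fun x t => A4 (x, t) := by rw [hdX3]; exact dX_curry hA3s
  have hdT1 : dT w = fun x t => V (x, t) := dT_curry hFs
  have hdTT : dT (dT w) = fun x t => pT V (x, t) := by rw [hdT1]; exact dT_curry hVs
  have hdX1p : ∀ x t, dX w x t = A1 (x, t) := fun x t => congrFun (congrFun hdX1 x) t
  have hdX2p : ∀ x t, dX (dX w) x t = A2 (x, t) := fun x t => congrFun (congrFun hdX2 x) t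
  have hnl1 : dX (dX (fun y s => (dX w y s) ^ 2 * dX (dX w) y s))
      = fun x t => pX (pX N1) (x, t) := by
    have h : (fun y s => (dX w y s) ^ 2 * dX (dX w) y s) = fun y s => N1 (y, s) := by
      funext y s; rw [hdX1p, hdX2p]
    rw [h, dX_curry hN1s]
    exact dX_curry (contDiff_pX hN1s)
  have hnl2 : dX (fun y s => (dX (dX w) y s) ^ 2 * dX w y s) = fun x t => pX N2 (x, t) := by
    have h : (fun y s => (dX (dX w) y s) ^ 2 * dX w y s) = fun y s => N2 (y, s) := by
      funext y s; rw [hdX1p, hdX2p]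
    rw [h]; exact dX_curry hN2s
  -- PDE restated
  have hPDE : ∀ x ∈ Ioo (0:ℝ) L, ∀ t ∈ Ioo (0:ℝ) T,
      pT V (x, t) = p x t - D * A4 (x, t) - D * pX (pX N1) (x, t) + D * pX N2 (x, t) := by
    intro x hx t ht
    have h := heq x hx t ht
    rw [hdTT, hdX4, hnl1, hnl2] at h
    simp only at h
    linarith
  -- Clairaut identities
  have hcl : pX V = pT A1 := clairaut hFs
  have hcl2 : pX (pT A1) = pT A2 := clairaut hA1s
  -- boundary values
  have hA2L : ∀ t ∈ Icc (0:ℝ) T, A2 (L, t) = 0 := by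
    intro t ht; have h := (hfree t ht).1; rwa [hdX2p] at h
  have hA3L : ∀ t ∈ Icc (0:ℝ) T, A3 (L, t) = 0 := by
    intro t ht; have h := (hfree t ht).2
    rw [congrFun (congrFun hdX3 L) t] at h; exact h
  have hA10 : ∀ t ∈ Icc (0:ℝ) T, A1 (0, t) = 0 := by
    intro t ht; have h := (hclamped t ht).2; rwa [hdX1p] at h
  have hF0 : ∀ t ∈ Icc (0:ℝ) T, F (0, t) = 0 := fun t ht => (hclamped t ht).1
  -- time derivatives of boundary values vanish in the interior
  have hV0 : ∀ t ∈ Ioo (0:ℝ) T, V (0, t) = 0 := by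
    intro t ht
    have hev : (fun s => F (0, s)) =ᶠ[nhds t] fun _ => (0:ℝ) := by
      filter_upwards [Ioo_mem_nhds ht.1 ht.2] with s hs
      exact hF0 s (Ioo_subset_Icc_self hs)
    have h1 : HasDerivAt (fun s => F (0, s)) (V (0, t)) t := hasDerivAt_pT hFs 0 t
    have h2 : HasDerivAt (fun _ : ℝ => (0:ℝ)) (V (0, t)) t := h1.congr_of_eventuallyEq hev.symm
    exact ((hasDerivAt_const t (0:ℝ)).unique h2).symm
  have hVx0 : ∀ t ∈ Ioo (0:ℝ) T, pT A1 (0, t) = 0 := by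
    intro t ht
    have hev : (fun s => A1 (0, s)) =ᶠ[nhds t] fun _ => (0:ℝ) := by
      filter_upwards [Ioo_mem_nhds ht.1 ht.2] with s hs
      exact hA10 s (Ioo_subset_Icc_self hs)
    have h1 : HasDerivAt (fun s => A1 (0, s)) (pT A1 (0, t)) t := hasDerivAt_pT hA1s 0 t
    have h2 : HasDerivAt (fun _ : ℝ => (0:ℝ)) (pT A1 (0, t)) t := h1.congr_of_eventuallyEq hev.symm
    exact ((hasDerivAt_const t (0:ℝ)).unique h2).symm
  -- bracket value pX N1 (L,t) = 0
  have hpxN1L : ∀ t ∈ Icc (0:ℝ) T, pX N1 (L, t) = 0 := by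
    intro t ht
    have h1 : HasDerivAt (fun x => N1 (x, t)) (pX N1 (L, t)) L := hasDerivAt_pX hN1s L t
    have h2 : HasDerivAt (fun x => (A1 (x, t)) ^ 2 * A2 (x, t))
        ((2 * A1 (L, t) ^ 1 * pX A1 (L, t)) * A2 (L, t) + (A1 (L, t)) ^ 2 * pX A2 (L, t)) L := by
      have := ((hasDerivAt_pX hA1s L t).pow 2).mul (hasDerivAt_pX hA2s L t)
      exact this.congr_deriv (by simp)
    have h3 := h1.unique h2
    rw [h3, ← hA2def, ← hA3def, hA2L t ht, hA3L t ht]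
    ring
  have hdT1p : ∀ x t, dT w x t = V (x, t) := fun x t => congrFun (congrFun hdT1 x) t
  -- energy integrand and its time derivative
  set e : ℝ × ℝ → ℝ := fun q => V q ^ 2 + D * A2 q ^ 2 + D * (A1 q ^ 2 * A2 q ^ 2) with hedef
  set e' : ℝ × ℝ → ℝ := fun q =>
    ((2 : ℕ) : ℝ) * V q ^ (2 - 1) * pT V q + D * (((2 : ℕ) : ℝ) * A2 q ^ (2 - 1) * pT A2 q)
      + D * (((2 : ℕ) : ℝ) * A1 q ^ (2 - 1) * pT A1 q * A2 q ^ 2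
        + A1 q ^ 2 * (((2 : ℕ) : ℝ) * A2 q ^ (2 - 1) * pT A2 q)) with he'def
  have hVt_c : Continuous (pT V) := (contDiff_pT hVs).continuous
  have hA1t_c : Continuous (pT A1) := (contDiff_pT hA1s).continuous
  have hA2t_c : Continuous (pT A2) := (contDiff_pT hA2s).continuous
  have he_c : Continuous e :=
    ((hVs.continuous.pow 2).add (continuous_const.mul (hA2s.continuous.pow 2))).add
      (continuous_const.mul ((hA1s.continuous.pow 2).mul (hA2s.continuous.pow 2)))
  have he'_c : Continuous e' := by
    rw [he'def]
    exact (((continuous_const.mul (hVs.continuous.pow (2 - 1))).mul hVt_c).add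
      (continuous_const.mul
        ((continuous_const.mul (hA2s.continuous.pow (2 - 1))).mul hA2t_c))).add
      (continuous_const.mul
        ((((continuous_const.mul (hA1s.continuous.pow (2 - 1))).mul hA1t_c).mul
          (hA2s.continuous.pow 2)).add
         ((hA1s.continuous.pow 2).mul
          ((continuous_const.mul (hA2s.continuous.pow (2 - 1))).mul hA2t_c))))
  have hd : ∀ x t, HasDerivAt (fun s => e (x, s)) (e' (x, t)) t := by
    intro x t
    exact (((hasDerivAt_pT hVs x t).pow 2).add
        (((hasDerivAt_pT hA2s x t).pow 2).const_mul D)).add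
      ((((hasDerivAt_pT hA1s x t).pow 2).mul ((hasDerivAt_pT hA2s x t).pow 2)).const_mul D)
  -- rewrite E₀ via e
  have hEfun : E₀ = fun t => (1 / 2) * ∫ x in (0:ℝ)..L, e (x, t) := by
    funext t
    rw [hE₀ t]
    congr 1
    apply intervalIntegral.integral_congr
    intro x _
    simp only [hedef]
    rw [hdT1p, hdX1p, hdX2p]
    ring
  have hE' : ∀ t₀ : ℝ, HasDerivAt E₀ ((1 / 2) * ∫ x in (0:ℝ)..L, e' (x, t₀)) t₀ := by
    intro t₀
    rw [hEfun]
    exact (hasDerivAt_parametric he_c he'_c hd L t₀).const_mul (1 / 2)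
  -- continuity conveniences
  have cV : ∀ t, Continuous fun x => V (x, t) := fun t => cont_slice hVs.continuous t
  have cVt : ∀ t, Continuous fun x => pT V (x, t) := fun t => cont_slice hVt_c t
  have cA1 : ∀ t, Continuous fun x => A1 (x, t) := fun t => cont_slice hA1s.continuous t
  have cA2 : ∀ t, Continuous fun x => A2 (x, t) := fun t => cont_slice hA2s.continuous t
  have cA1t : ∀ t, Continuous fun x => pT A1 (x, t) := fun t => cont_slice hA1t_c t
  have cA2t : ∀ t, Continuous fun x => pT A2 (x, t) := fun t => cont_slice hA2t_c t
  have cN1 : ∀ t, Continuous fun x => N1 (x, t) := fun t => cont_slice hN1s.continuous t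
  have cN2 : ∀ t, Continuous fun x => N2 (x, t) := fun t => cont_slice hN2s.continuous t
  have cA4 : ∀ t, Continuous fun x => A4 (x, t) := fun t => cont_slice hA4s.continuous t
  have cPP : ∀ t, Continuous fun x => pX (pX N1) (x, t) :=
    fun t => cont_slice (contDiff_pX (contDiff_pX hN1s)).continuous t
  have cPN : ∀ t, Continuous fun x => pX N2 (x, t) :=
    fun t => cont_slice (contDiff_pX hN2s).continuous t
  have cp : ∀ t, Continuous fun x => p x t := fun t => cont_slice hp t
  -- the energy identity
  have key : ∀ t₀ ∈ Ioo (0:ℝ) T,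
      (1 / 2) * (∫ x in (0:ℝ)..L, e' (x, t₀)) = ∫ x in (0:ℝ)..L, V (x, t₀) * p x t₀ := by
    intro t₀ ht₀
    have ht₀' : t₀ ∈ Icc (0:ℝ) T := Ioo_subset_Icc_self ht₀
    -- split the derivative integral
    have hsplit : (fun x => e' (x, t₀)) = fun x =>
        2 * (V (x, t₀) * pT V (x, t₀)) + (2 * D) * (pT A2 (x, t₀) * A2 (x, t₀))
          + (2 * D) * (pT A2 (x, t₀) * N1 (x, t₀)) + (2 * D) * (pT A1 (x, t₀) * N2 (x, t₀)) := by
      funext x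
      simp only [he'def, hN1def, hN2def]
      push_cast
      ring
    have hsum : ∫ x in (0:ℝ)..L, e' (x, t₀)
        = 2 * (∫ x in (0:ℝ)..L, V (x, t₀) * pT V (x, t₀))
          + (2 * D) * (∫ x in (0:ℝ)..L, pT A2 (x, t₀) * A2 (x, t₀))
          + (2 * D) * (∫ x in (0:ℝ)..L, pT A2 (x, t₀) * N1 (x, t₀))
          + (2 * D) * (∫ x in (0:ℝ)..L, pT A1 (x, t₀) * N2 (x, t₀)) := by
      rw [hsplit]
      exact integral_comb4 2 (2 * D) (2 * D) (2 * D)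
        ((cV t₀).mul (cVt t₀)) ((cA2t t₀).mul (cA2 t₀))
        ((cA2t t₀).mul (cN1 t₀)) ((cA1t t₀).mul (cN2 t₀))
    -- substitute the PDE a.e.
    have hL0 : ∀ᵐ x : ℝ ∂volume, x ≠ L := by
      have h0 : (volume : Measure ℝ) {L} = 0 := measure_singleton L
      have h := MeasureTheory.measure_eq_zero_iff_ae_notMem.mp h0
      simpa using h
    have hae : ∀ᵐ x : ℝ, x ∈ Set.uIoc (0:ℝ) L →
        V (x, t₀) * pT V (x, t₀)
          = 1 * (V (x, t₀) * p x t₀) + (-D) * (V (x, t₀) * A4 (x, t₀))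
            + (-D) * (V (x, t₀) * pX (pX N1) (x, t₀)) + D * (V (x, t₀) * pX N2 (x, t₀)) := by
      filter_upwards [hL0] with x hxL hx
      rw [Set.uIoc_of_le hL.le] at hx
      have hxIoo : x ∈ Ioo (0:ℝ) L := ⟨hx.1, lt_of_le_of_ne hx.2 hxL⟩
      rw [hPDE x hxIoo t₀ ht₀]
      ring
    have hK1 : ∫ x in (0:ℝ)..L, V (x, t₀) * pT V (x, t₀)
        = 1 * (∫ x in (0:ℝ)..L, V (x, t₀) * p x t₀)
          + (-D) * (∫ x in (0:ℝ)..L, V (x, t₀) * A4 (x, t₀))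
          + (-D) * (∫ x in (0:ℝ)..L, V (x, t₀) * pX (pX N1) (x, t₀))
          + D * (∫ x in (0:ℝ)..L, V (x, t₀) * pX N2 (x, t₀)) := by
      rw [intervalIntegral.integral_congr_ae hae]
      exact integral_comb4 1 (-D) (-D) D
        ((cV t₀).mul (cp t₀)) ((cV t₀).mul (cA4 t₀))
        ((cV t₀).mul (cPP t₀)) ((cV t₀).mul (cPN t₀))
    -- integration by parts chains
    have ibp1 : ∫ x in (0:ℝ)..L, V (x, t₀) * A4 (x, t₀)
        = ∫ x in (0:ℝ)..L, pT A2 (x, t₀) * A2 (x, t₀) := by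
      have e1 : ∫ x in (0:ℝ)..L, V (x, t₀) * A4 (x, t₀)
          = V (L, t₀) * A3 (L, t₀) - V (0, t₀) * A3 (0, t₀)
            - ∫ x in (0:ℝ)..L, pX V (x, t₀) * A3 (x, t₀) := ibp_smooth hVs hA3s 0 L t₀
      have e2 : ∫ x in (0:ℝ)..L, pT A1 (x, t₀) * A3 (x, t₀)
          = pT A1 (L, t₀) * A2 (L, t₀) - pT A1 (0, t₀) * A2 (0, t₀)
            - ∫ x in (0:ℝ)..L, pX (pT A1) (x, t₀) * A2 (x, t₀) :=
        ibp_smooth (contDiff_pT hA1s) hA2s 0 L t₀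
      rw [hcl] at e1
      rw [hcl2] at e2
      rw [e1, e2, hA3L t₀ ht₀', hV0 t₀ ht₀, hA2L t₀ ht₀', hVx0 t₀ ht₀]
      ring
    have ibp2 : ∫ x in (0:ℝ)..L, V (x, t₀) * pX (pX N1) (x, t₀)
        = ∫ x in (0:ℝ)..L, pT A2 (x, t₀) * N1 (x, t₀) := by
      have e1 : ∫ x in (0:ℝ)..L, V (x, t₀) * pX (pX N1) (x, t₀)
          = V (L, t₀) * pX N1 (L, t₀) - V (0, t₀) * pX N1 (0, t₀)
            - ∫ x in (0:ℝ)..L, pX V (x, t₀) * pX N1 (x, t₀) :=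
        ibp_smooth hVs (contDiff_pX hN1s) 0 L t₀
      have e2 : ∫ x in (0:ℝ)..L, pT A1 (x, t₀) * pX N1 (x, t₀)
          = pT A1 (L, t₀) * N1 (L, t₀) - pT A1 (0, t₀) * N1 (0, t₀)
            - ∫ x in (0:ℝ)..L, pX (pT A1) (x, t₀) * N1 (x, t₀) :=
        ibp_smooth (contDiff_pT hA1s) hN1s 0 L t₀
      have hN1L : N1 (L, t₀) = 0 := by
        simp only [hN1def]
        rw [hA2L t₀ ht₀']
        ring
      rw [hcl] at e1
      rw [hcl2] at e2
      rw [e1, e2, hpxN1L t₀ ht₀', hV0 t₀ ht₀, hN1L, hVx0 t₀ ht₀]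
      ring
    have ibp3 : ∫ x in (0:ℝ)..L, V (x, t₀) * pX N2 (x, t₀)
        = - ∫ x in (0:ℝ)..L, pT A1 (x, t₀) * N2 (x, t₀) := by
      have e1 : ∫ x in (0:ℝ)..L, V (x, t₀) * pX N2 (x, t₀)
          = V (L, t₀) * N2 (L, t₀) - V (0, t₀) * N2 (0, t₀)
            - ∫ x in (0:ℝ)..L, pX V (x, t₀) * N2 (x, t₀) := ibp_smooth hVs hN2s 0 L t₀
      have hN2L : N2 (L, t₀) = 0 := by
        simp only [hN2def]
        rw [hA2L t₀ ht₀']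
        ring
      rw [hcl] at e1
      rw [e1, hN2L, hV0 t₀ ht₀]
      ring
    rw [hsum, hK1, ibp1, ibp2, ibp3]
    ring
  -- the differential inequality
  have hineq : ∀ t₀ ∈ Ioo (0:ℝ) T,
      (∫ x in (0:ℝ)..L, V (x, t₀) * p x t₀)
        ≤ E₀ t₀ + (1 / 2) * ∫ x in (0:ℝ)..L, (p x t₀) ^ 2 := by
    intro t₀ ht₀
    have h1 : (∫ x in (0:ℝ)..L, V (x, t₀) * p x t₀)
        ≤ ∫ x in (0:ℝ)..L, ((1/2) * V (x, t₀) ^ 2 + (1/2) * (p x t₀) ^ 2) := by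
      apply intervalIntegral.integral_mono_on hL.le
      · exact ((cV t₀).mul (cp t₀)).intervalIntegrable 0 L
      · exact ((continuous_const.mul ((cV t₀).pow 2)).add
          (continuous_const.mul ((cp t₀).pow 2))).intervalIntegrable 0 L
      · intro x _
        nlinarith [sq_nonneg (V (x, t₀) - p x t₀)]
    have h2 : ∫ x in (0:ℝ)..L, ((1/2) * V (x, t₀) ^ 2 + (1/2) * (p x t₀) ^ 2)
        = (1/2) * (∫ x in (0:ℝ)..L, V (x, t₀) ^ 2)
          + (1/2) * (∫ x in (0:ℝ)..L, (p x t₀) ^ 2) :=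
      integral_comb2 (1/2) (1/2) ((cV t₀).pow 2) ((cp t₀).pow 2)
    have h3 : (∫ x in (0:ℝ)..L, V (x, t₀) ^ 2) ≤ ∫ x in (0:ℝ)..L, e (x, t₀) := by
      apply intervalIntegral.integral_mono_on hL.le
      · exact ((cV t₀).pow 2).intervalIntegrable 0 L
      · exact (cont_slice he_c t₀).intervalIntegrable 0 L
      · intro x _
        simp only [hedef]
        nlinarith [mul_nonneg hD.le (sq_nonneg (A2 (x, t₀))),
          mul_nonneg hD.le (mul_nonneg (sq_nonneg (A1 (x, t₀))) (sq_nonneg (A2 (x, t₀))))]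
    have h4 : E₀ t₀ = (1/2) * ∫ x in (0:ℝ)..L, e (x, t₀) := congrFun hEfun t₀
    rw [h4]
    linarith
  -- the forcing function
  have hhc : Continuous fun τ => ∫ x in (0:ℝ)..L, (p x τ) ^ 2 := by
    apply intervalIntegral.continuous_parametric_intervalIntegral_of_continuous' (μ := volume)
      (f := fun τ x => (p x τ) ^ 2) _ 0 L
    exact (hp.comp continuous_swap).pow 2
  set g : ℝ → ℝ := fun t => (1/2) * ∫ τ in (0:ℝ)..t, ∫ x in (0:ℝ)..L, (p x τ) ^ 2 with hgdef
  have hg' : ∀ t : ℝ, HasDerivAt g ((1/2) * ∫ x in (0:ℝ)..L, (p x t) ^ 2) t := by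
    intro t
    exact ((hhc.integral_hasStrictDerivAt 0 t).hasDerivAt).const_mul (1/2)
  have hg'nonneg : ∀ t : ℝ, 0 ≤ (1/2) * ∫ x in (0:ℝ)..L, (p x t) ^ 2 := by
    intro t
    have h : (0:ℝ) ≤ ∫ x in (0:ℝ)..L, (p x t) ^ 2 :=
      intervalIntegral.integral_nonneg (μ := volume) hL.le (fun x _ => sq_nonneg (p x t))
    linarith
  have hg0 : g 0 = 0 := by
    simp [hgdef]
  have hgc : ContinuousOn g (Icc 0 T) := by
    intro t _
    exact ((hg' t).continuousAt).continuousWithinAt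
  have hfc : ContinuousOn E₀ (Icc 0 T) := by
    rw [hEfun]
    apply Continuous.continuousOn
    apply continuous_const.mul
    apply intervalIntegral.continuous_parametric_intervalIntegral_of_continuous' (μ := volume)
      (f := fun t x => e (x, t)) _ 0 L
    exact he_c.comp continuous_swap
  -- Gronwall
  have final := gronwall_aux hfc hgc hg0 ?_
  · exact final
  · intro t ht
    refine ⟨∫ x in (0:ℝ)..L, V (x, t) * p x t, (1/2) * ∫ x in (0:ℝ)..L, (p x t) ^ 2, ?_, hg' t,
      hg'nonneg t, hineq t ht⟩
    have h := hE' t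
    rwa [key t ht] at h
end
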